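/- Let f be a monotone submodular set function with f(∅) = 0 and let A_i denote the greedy sets. Then for any set A* with |A*| ≤ k and any i ≥ 0, f(A*) − f(A_{i+1}) ≤ (1 − 1/k)(f(A*) − f(A_i)). Consequently f(A*) − f(A_k) ≤ (1 − 1/k)^k · f(A*). -/

import Mathlib

/-!
Submodularity bounds the gain of adding the optimal set `A*` to the greedy set `A_i` by the sum
of the gains of its at most `k` elements, each of which is at most the greedy gain. Hence the
greedy step closes at least a `1/k` fraction of the gap `f(A*) − f(A_i)`, and iterating this
contraction `k` times from `f(A_0) = 0` gives the bound on `f(A*) − f(A_k)`.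
-/

open Finset

section Submodular

variable {V : Type*} [DecidableEq V] {f : Finset V → ℝ}

lemma monotone_of_le_insert (hmono : ∀ (A : Finset V) (j : V), f A ≤ f (insert j A)) :
    Monotone f := by
  have le_union : ∀ B S : Finset V, f B ≤ f (B ∪ S) := by
    intro B S
    induction S using Finset.induction_on with
    | empty => simp
    | insert a S _ ih => exact ih.trans (by rw [union_insert]; exact hmono _ _)
  intro B C hBC
  simpa [union_eq_right.mpr hBC] using le_union B C

lemma sub_le_sum_insert_sub (hmono : ∀ (A : Finset V) (j : V), f A ≤ f (insert j A))
    (hsub : ∀ (A B : Finset V) (j : V), A ⊆ B → j ∉ B →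
      f (insert j B) - f B ≤ f (insert j A) - f A)
    (B S : Finset V) : f (B ∪ S) - f B ≤ ∑ e ∈ S, (f (insert e B) - f B) := by
  induction S using Finset.induction_on with
  | empty => simp
  | insert a S ha ih =>
    have hgain : f (insert a (B ∪ S)) - f (B ∪ S) ≤ f (insert a B) - f B := by
      by_cases haBS : a ∈ B ∪ S
      · rw [insert_eq_of_mem haBS]
        linarith [hmono B a]
      · exact hsub B (B ∪ S) a subset_union_left haBS
    rw [sum_insert ha, union_insert]
    linarith

lemma sub_le_mul_greedy_gain (hmono : ∀ (A : Finset V) (j : V), f A ≤ f (insert j A))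
    (hsub : ∀ (A B : Finset V) (j : V), A ⊆ B → j ∉ B →
      f (insert j B) - f B ≤ f (insert j A) - f A)
    {B S : Finset V} {j : V} {k : ℕ} (hbest : ∀ c, f (insert c B) ≤ f (insert j B))
    (hcard : S.card ≤ k) :
    f S - f B ≤ k * (f (insert j B) - f B) := by
  have hgain : 0 ≤ f (insert j B) - f B := sub_nonneg.mpr (hmono B j)
  calc f S - f B ≤ f (B ∪ S) - f B := by
        gcongr; exact monotone_of_le_insert hmono subset_union_right
    _ ≤ ∑ e ∈ S, (f (insert e B) - f B) := sub_le_sum_insert_sub hmono hsub B S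
    _ ≤ ∑ _e ∈ S, (f (insert j B) - f B) := sum_le_sum fun e _ => by linarith [hbest e]
    _ = S.card * (f (insert j B) - f B) := by rw [sum_const, nsmul_eq_mul]
    _ ≤ k * (f (insert j B) - f B) := by gcongr

end Submodular

/-- With `k = 0` the hypothesis forces `a ≤ b`, and `1 / 0 = 0` makes the claim `a - c ≤ a - b`. -/
lemma sub_le_one_sub_one_div_mul_sub {a b c k : ℝ} (hk : 0 ≤ k) (hbc : b ≤ c)
    (h : a - b ≤ k * (c - b)) : a - c ≤ (1 - 1 / k) * (a - b) := by
  rcases hk.eq_or_lt with rfl | hk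
  · simp only [div_zero, sub_zero, one_mul]
    linarith
  · have : (a - b) / k ≤ c - b := by rw [div_le_iff₀ hk]; linarith
    rw [sub_mul, one_mul, one_div_mul_eq_div]
    linarith

theorem greedy_per_step_bound_general {V : Type*} [DecidableEq V]
    (f : Finset V → ℝ)
    (hmono : ∀ (A : Finset V) (j : V), f A ≤ f (insert j A))
    (hsub : ∀ (A B : Finset V) (j : V), A ⊆ B → j ∉ B →
      f (insert j B) - f B ≤ f (insert j A) - f A)
    (hempty : f ∅ = 0)
    (A : ℕ → Finset V) (hA0 : A 0 = ∅)
    (hgreedy : ∀ i, ∃ j, A (i + 1) = insert j (A i) ∧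
      ∀ c, f (insert c (A i)) ≤ f (insert j (A i)))
    (k : ℕ) (Astar : Finset V) (hcard : Astar.card ≤ k) :
    (∀ i, f Astar - f (A (i + 1)) ≤ (1 - 1 / (k : ℝ)) * (f Astar - f (A i))) ∧
      f Astar - f (A k) ≤ (1 - 1 / (k : ℝ)) ^ k * f Astar := by
  have hstep : ∀ i, f Astar - f (A (i + 1)) ≤ (1 - 1 / (k : ℝ)) * (f Astar - f (A i)) := by
    intro i
    obtain ⟨j, hj, hbest⟩ := hgreedy i
    rw [hj]
    exact sub_le_one_sub_one_div_mul_sub k.cast_nonneg (hmono _ j)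
      (sub_le_mul_greedy_gain hmono hsub hbest hcard)
  refine ⟨hstep, ?_⟩
  simpa [hA0, hempty] using
    le_geom (u := fun n => f Astar - f (A n)) (Nat.one_sub_one_div_cast_nonneg k) k
      fun i _ => hstep i

/-- For the greedy algorithm on a monotone submodular function `f` with
`f(∅) = 0`, and any `Astar` with `|Astar| ≤ k`:
`f(Astar) − f(A_{i+1}) ≤ (1 − 1/k)(f(Astar) − f(A_i))` for every `i`, and
consequently `f(Astar) − f(A_k) ≤ (1 − 1/k)^k · f(Astar)`. -/
theorem greedy_per_step_bound {V : Type*} [Fintype V] [DecidableEq V]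
    (f : Finset V → ℝ)
    (hmono : ∀ (A : Finset V) (j : V), f A ≤ f (insert j A))
    (hsub : ∀ (A B : Finset V) (j : V), A ⊆ B → j ∉ B →
      f (insert j B) - f B ≤ f (insert j A) - f A)
    (hempty : f ∅ = 0)
    (A : ℕ → Finset V) (hA0 : A 0 = ∅)
    (hgreedy : ∀ i, ∃ j, A (i + 1) = insert j (A i) ∧
      ∀ c, f (insert c (A i)) ≤ f (insert j (A i)))
    (k : ℕ) (Astar : Finset V) (hcard : Astar.card ≤ k) :
    (∀ i, f Astar - f (A (i + 1)) ≤ (1 - 1 / (k : ℝ)) * (f Astar - f (A i))) ∧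
      f Astar - f (A k) ≤ (1 - 1 / (k : ℝ)) ^ k * f Astar :=
  greedy_per_step_bound_general f hmono hsub hempty A hA0 hgreedy k Astar hcard
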